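/- The metric space (usc-fcns(S), dl) of usc functions from a rectangle S ⊆ ℝ^m into [0,1], equipped with the hypo-distance, is separable: the countable family of rational-valued order-0 epi-splines over a countable infinite refinement of box partitions is dense. -/

import Mathlib

open Metric Set Filter Pointwise

/-- The hypograph of `f` restricted to `S`, as a subset of `(Fin m → ℝ) × ℝ`
(carrying the max-norm, since both the `Pi` and `Prod` norms are sup-norms). -/
def hypo {m : ℕ} (S : Set (Fin m → ℝ)) (f : (Fin m → ℝ) → ℝ) :
    Set ((Fin m → ℝ) × ℝ) :=
  {p | p.1 ∈ S ∧ p.2 ≤ f p.1}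

/-- The truncated ρ-hypo-distance
`dl_ρ(f,g) = sup { |dist(x̄, hypo f) − dist(x̄, hypo g)| : ‖x̄‖ ≤ ρ }`. -/
noncomputable def dlrho {m : ℕ} (S : Set (Fin m → ℝ)) (f g : (Fin m → ℝ) → ℝ)
    (ρ : ℝ) : ℝ :=
  sSup ((fun p => |Metric.infDist p (hypo S f) - Metric.infDist p (hypo S g)|) ''
    {p : (Fin m → ℝ) × ℝ | ‖p‖ ≤ ρ})

/-- The hypo-distance `dl(f,g) = ∫₀^∞ dl_ρ(f,g) e^{−ρ} dρ`. -/
noncomputable def dl {m : ℕ} (S : Set (Fin m → ℝ)) (f g : (Fin m → ℝ) → ℝ) : ℝ :=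
  ∫ ρ in Set.Ioi (0 : ℝ), dlrho S f g ρ * Real.exp (-ρ)

/-- The Attouch–Wets hat-distance
`d̂l_ρ(f,g) = inf{η ≥ 0 : hypo f ∩ ρ𝕊 ⊆ hypo g + η𝕊 and hypo g ∩ ρ𝕊 ⊆ hypo f + η𝕊}`. -/
noncomputable def hatdl {m : ℕ} (S : Set (Fin m → ℝ)) (f g : (Fin m → ℝ) → ℝ)
    (ρ : ℝ) : ℝ :=
  sInf {η : ℝ | 0 ≤ η ∧
    hypo S f ∩ Metric.closedBall (0 : (Fin m → ℝ) × ℝ) ρ ⊆ hypo S g + Metric.closedBall (0 : (Fin m → ℝ) × ℝ) η ∧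
    hypo S g ∩ Metric.closedBall (0 : (Fin m → ℝ) × ℝ) ρ ⊆ hypo S f + Metric.closedBall (0 : (Fin m → ℝ) × ℝ) η}

/-- The open box `(l₁,u₁) × ⋯ × (l_m,u_m)`. -/
def openBox {m : ℕ} (l u : Fin m → ℝ) : Set (Fin m → ℝ) :=
  {x | ∀ i, l i < x i ∧ x i < u i}

/-- The closed box `[l₁,u₁] × ⋯ × [l_m,u_m]`. -/
def closedBox {m : ℕ} (l u : Fin m → ℝ) : Set (Fin m → ℝ) :=
  {x | ∀ i, l i ≤ x i ∧ x i ≤ u i}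

/-! Cut the box into `(n + 1) ^ m` congruent closed cells of mesh `< δ` and let `g` take on
each cell a rational value in `[0, 1]` above the supremum of `f` over the cell but within `δ`
of it. Then `hypo f ⊆ hypo g`, and every point `(x, t)` of `hypo g` is within sup-distance `δ`
of the point `(y, min t (f y))` of `hypo f`, where `y` is a near-maximiser of `f` in the cell
of `x`. So the hypographs are at Hausdorff distance at most `δ`, which bounds every `dl_ρ`,
hence `dl`. Rational values on such grids form a countable family. -/

open MeasureTheory

lemma dlrho_nonneg {m : ℕ} (S : Set (Fin m → ℝ)) (f g : (Fin m → ℝ) → ℝ) (ρ : ℝ) :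
    0 ≤ dlrho S f g ρ :=
  Real.sSup_nonneg (by rintro _ ⟨p, -, rfl⟩; exact abs_nonneg _)

lemma dl_le_of_forall_abs_infDist_sub_le {m : ℕ} {S : Set (Fin m → ℝ)}
    {f g : (Fin m → ℝ) → ℝ} {δ : ℝ} (hδ : 0 ≤ δ)
    (h : ∀ p, |infDist p (hypo S f) - infDist p (hypo S g)| ≤ δ) : dl S f g ≤ δ := by
  have hρ : ∀ ρ, dlrho S f g ρ ≤ δ := fun ρ =>
    Real.sSup_le (by rintro _ ⟨p, -, rfl⟩; exact h p) hδ
  calc dl S f g ≤ ∫ ρ in Ioi (0 : ℝ), δ * Real.exp (-ρ) :=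
        integral_mono_of_nonneg
          (ae_of_all _ fun ρ => mul_nonneg (dlrho_nonneg S f g ρ) (Real.exp_pos _).le)
          ((integrableOn_exp_neg_Ioi 0).const_mul δ)
          (ae_of_all _ fun ρ => mul_le_mul_of_nonneg_right (hρ ρ) (Real.exp_pos _).le)
    _ = δ := by rw [integral_const_mul, integral_exp_neg_Ioi_zero, mul_one]

lemma abs_infDist_sub_infDist_le {X : Type*} [PseudoMetricSpace X] {A B : Set X} {δ : ℝ}
    (hδ : 0 ≤ δ) (hAB : ∀ a ∈ A, ∃ b ∈ B, dist a b ≤ δ) (hBA : ∀ b ∈ B, ∃ a ∈ A, dist b a ≤ δ)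
    (p : X) : |infDist p A - infDist p B| ≤ δ := by
  have hfin : hausdorffEDist A B ≠ ⊤ := by
    refine ne_top_of_le_ne_top ENNReal.ofReal_ne_top
      (hausdorffEDist_le_of_mem_edist (r := ENNReal.ofReal δ) ?_ ?_)
    · simpa only [edist_le_ofReal hδ] using hAB
    · simpa only [edist_le_ofReal hδ] using hBA
  have hH : hausdorffDist A B ≤ δ := hausdorffDist_le_of_mem_dist hδ hAB hBA
  have hA := infDist_le_infDist_add_hausdorffDist (x := p) hfin
  have hB := infDist_le_infDist_add_hausdorffDist (s := B) (t := A) (x := p)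
    (by rwa [hausdorffEDist_comm])
  rw [hausdorffDist_comm] at hB
  rw [abs_sub_le_iff]
  constructor <;> linarith

lemma dl_le_of_le_of_exists_dist_le {m : ℕ} {S : Set (Fin m → ℝ)} {f g : (Fin m → ℝ) → ℝ}
    {δ : ℝ} (hδ : 0 ≤ δ) (hfg : ∀ x ∈ S, f x ≤ g x)
    (hgf : ∀ x ∈ S, ∃ y ∈ S, dist x y ≤ δ ∧ g x ≤ f y + δ) : dl S f g ≤ δ := by
  refine dl_le_of_forall_abs_infDist_sub_le hδ (abs_infDist_sub_infDist_le hδ ?_ ?_)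
  · rintro ⟨x, t⟩ ⟨hx, ht⟩
    exact ⟨(x, t), ⟨hx, ht.trans (hfg x hx)⟩, by simpa using hδ⟩
  · rintro ⟨x, t⟩ ⟨hx, ht⟩
    obtain ⟨y, hy, hxy, hgy⟩ := hgf x hx
    refine ⟨(y, min t (f y)), ⟨hy, min_le_right _ _⟩, ?_⟩
    rw [Prod.dist_eq, Real.dist_eq]
    refine max_le hxy (abs_le.2 ⟨?_, ?_⟩) <;>
      rcases min_cases t (f y) with ⟨h, _⟩ | ⟨h, _⟩ <;> rw [h] <;> linarith

lemma exists_rat_mem_Icc_upperBound_near {X : Type*} {T : Set X} (hT : T.Nonempty)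
    {f : X → ℝ} (hf : ∀ y ∈ T, f y ∈ Icc (0 : ℝ) 1) {δ : ℝ} (hδ : 0 < δ) :
    ∃ q : ℚ, (q : ℝ) ∈ Icc (0 : ℝ) 1 ∧ (∀ y ∈ T, f y ≤ q) ∧ ∃ y ∈ T, (q : ℝ) ≤ f y + δ := by
  have hbdd : BddAbove (f '' T) := ⟨1, by rintro _ ⟨y, hy, rfl⟩; exact (hf y hy).2⟩
  set M := sSup (f '' T)
  have hfM : ∀ z ∈ T, f z ≤ M := fun z hz => le_csSup hbdd (mem_image_of_mem f hz)
  obtain ⟨r, hMr, hrM⟩ := exists_rat_btwn (lt_add_of_pos_right M (half_pos hδ))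
  obtain ⟨_, ⟨y, hy, rfl⟩, hMy⟩ :=
    exists_lt_of_lt_csSup (hT.image f) (sub_lt_self M (half_pos hδ))
  refine ⟨min r 1, ⟨?_, ?_⟩, fun z hz => ?_, y, hy, ?_⟩ <;> push_cast
  · exact le_min ((hf y hy).1.trans (hfM y hy) |>.trans hMr.le) zero_le_one
  · exact min_le_right _ _
  · exact le_min ((hfM z hz).trans hMr.le) (hf z hz).2
  · linarith [min_le_left (r : ℝ) 1]

lemma upperSemicontinuous_finset_sup' {ι X : Type*} [TopologicalSpace X] {s : Finset ι}
    (hs : s.Nonempty) {h : ι → X → ℝ} (hh : ∀ k ∈ s, UpperSemicontinuous (h k)) :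
    UpperSemicontinuous fun x => s.sup' hs fun k => h k x := by
  induction hs using Finset.Nonempty.cons_induction with
  | singleton k => simpa using hh k (Finset.mem_singleton_self k)
  | cons k s hk hs ih =>
    simp only [Finset.sup'_cons hs]
    exact (hh k (Finset.mem_cons_self k s)).sup
      (ih fun j hj => hh j (Finset.mem_cons_of_mem hj))

section Grid

lemma isClosed_closedBox {m : ℕ} (l u : Fin m → ℝ) : IsClosed (closedBox l u) := by
  have : closedBox l u = Icc l u := by ext; simp [closedBox, Pi.le_def, forall_and]
  exact this ▸ isClosed_Icc

lemma openBox_subset_closedBox {m : ℕ} (l u : Fin m → ℝ) : openBox l u ⊆ closedBox l u :=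
  fun _ hx i => ⟨(hx i).1.le, (hx i).2.le⟩

lemma exists_fin_mem_grid_cell {a b x : ℝ} (hax : a ≤ x) (hxb : x ≤ b) (n : ℕ) :
    ∃ c : Fin (n + 1), a + c * ((b - a) / (n + 1)) ≤ x ∧
      x ≤ a + c * ((b - a) / (n + 1)) + (b - a) / (n + 1) := by
  set h := (b - a) / (n + 1) with hh
  have hnh : (n + 1) * h = b - a := by rw [hh]; field_simp
  have h0 : 0 ≤ h := div_nonneg (by linarith) (by positivity)
  rcases hxb.eq_or_lt with rfl | hxb
  · exact ⟨Fin.last n, by simp only [Fin.val_last]; linarith, by simp only [Fin.val_last]; linarith⟩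
  replace h0 : 0 < h := div_pos (by linarith) (by positivity)
  set r := (x - a) / h
  have hr : r < n + 1 := by rw [div_lt_iff₀ h0]; linarith
  refine ⟨⟨⌊r⌋₊, by exact_mod_cast (Nat.floor_lt (by positivity)).2 (by exact_mod_cast hr)⟩, ?_, ?_⟩
  · have := (le_div_iff₀ h0).1 (Nat.floor_le (div_nonneg (sub_nonneg.2 hax) h0.le))
    simp only
    linarith
  · have := (div_lt_iff₀ h0).1 (Nat.lt_floor_add_one r)
    simp only
    linarith

lemma eq_of_mem_grid_cell {a h x : ℝ} {c c' : ℕ} (hx : a + c * h < x ∧ x < a + c * h + h)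
    (hx' : a + c' * h ≤ x ∧ x ≤ a + c' * h + h) : c = c' := by
  have h0 : 0 < h := by linarith
  have h1 : (c : ℝ) < c' + 1 := (mul_lt_mul_iff_of_pos_right h0).1 (by linarith)
  have h2 : (c' : ℝ) < c + 1 := (mul_lt_mul_iff_of_pos_right h0).1 (by linarith)
  norm_cast at h1 h2
  omega

lemma grid_cell_bounds {a b : ℝ} (hab : a ≤ b) {n : ℕ} (c : Fin (n + 1)) :
    a ≤ a + c * ((b - a) / (n + 1)) ∧ a + c * ((b - a) / (n + 1)) + (b - a) / (n + 1) ≤ b := by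
  have h0 : 0 ≤ (b - a) / (n + 1) := div_nonneg (by linarith) (by positivity)
  have hnh : (n + 1) * ((b - a) / (n + 1)) = b - a := by field_simp
  have hc : (c : ℝ) + 1 ≤ n + 1 := by exact_mod_cast Nat.succ_le_succ (Nat.lt_succ_iff.1 c.2)
  constructor <;> nlinarith

variable {m : ℕ} (α β : Fin m → ℝ) (n : ℕ)

noncomputable def gridMesh : Fin m → ℝ := fun i => (β i - α i) / (n + 1)

noncomputable def cellLower (k : Fin m → Fin (n + 1)) : Fin m → ℝ :=
  fun i => α i + k i * gridMesh α β n i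

noncomputable def cellUpper (k : Fin m → Fin (n + 1)) : Fin m → ℝ :=
  fun i => cellLower α β n k i + gridMesh α β n i

lemma exists_gridMesh_lt {δ : ℝ} (hδ : 0 < δ) : ∃ n, ∀ i, gridMesh α β n i < δ := by
  have h : ∀ i, ∀ᶠ n : ℕ in atTop, gridMesh α β n i < δ := fun i =>
    Tendsto.eventually_lt_const hδ (by
      simpa [gridMesh, Function.comp_def] using
        (tendsto_const_div_atTop_nhds_zero_nat (β i - α i)).comp (tendsto_add_atTop_nat 1))
  exact (eventually_all.2 h).exists

variable {α β n}

lemma closedBox_cell_subset (hαβ : ∀ i, α i ≤ β i) (k : Fin m → Fin (n + 1)) :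
    closedBox (cellLower α β n k) (cellUpper α β n k) ⊆ closedBox α β := fun _ hx i =>
  ⟨(grid_cell_bounds (hαβ i) (k i)).1.trans (hx i).1,
    (hx i).2.trans (grid_cell_bounds (hαβ i) (k i)).2⟩

lemma cellLower_mem_closedBox_cell (hαβ : ∀ i, α i ≤ β i) (k : Fin m → Fin (n + 1)) :
    cellLower α β n k ∈ closedBox (cellLower α β n k) (cellUpper α β n k) := fun i =>
  ⟨le_rfl, le_add_of_nonneg_right (div_nonneg (sub_nonneg.2 (hαβ i)) (by positivity))⟩

lemma exists_mem_closedBox_cell {x : Fin m → ℝ} (hx : x ∈ closedBox α β) :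
    ∃ k, x ∈ closedBox (cellLower α β n k) (cellUpper α β n k) := by
  choose k hk using fun i => exists_fin_mem_grid_cell (hx i).1 (hx i).2 n
  exact ⟨k, hk⟩

lemma eq_of_mem_openBox_cell_of_mem_closedBox_cell {x : Fin m → ℝ} {k k' : Fin m → Fin (n + 1)}
    (hx : x ∈ openBox (cellLower α β n k) (cellUpper α β n k))
    (hx' : x ∈ closedBox (cellLower α β n k') (cellUpper α β n k')) : k = k' :=
  funext fun i => Fin.ext (eq_of_mem_grid_cell (hx i) (hx' i))

lemma dist_le_of_mem_closedBox_cell {δ : ℝ} (hδ : 0 ≤ δ) (hn : ∀ i, gridMesh α β n i ≤ δ)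
    {k : Fin m → Fin (n + 1)} {x y : Fin m → ℝ}
    (hx : x ∈ closedBox (cellLower α β n k) (cellUpper α β n k))
    (hy : y ∈ closedBox (cellLower α β n k) (cellUpper α β n k)) : dist x y ≤ δ := by
  refine (dist_pi_le_iff hδ).2 fun i => ?_
  rw [Real.dist_eq, abs_sub_le_iff]
  have hxi := hx i
  have hyi := hy i
  simp only [cellUpper] at hxi hyi
  constructor <;> linarith [hn i]

end Grid

section GridSpline

variable {m : ℕ} {α β : Fin m → ℝ} {n : ℕ}

variable (α β n) in
/-- On a face shared by several cells this takes the largest of their values, which makes it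
upper semicontinuous. -/
noncomputable def gridSpline (q : (Fin m → Fin (n + 1)) → ℚ) (x : Fin m → ℝ) : ℝ :=
  Finset.univ.sup' Finset.univ_nonempty fun k =>
    (closedBox (cellLower α β n k) (cellUpper α β n k)).indicator (fun _ => (q k : ℝ)) x

lemma upperSemicontinuous_gridSpline {q : (Fin m → Fin (n + 1)) → ℚ} (hq : ∀ k, 0 ≤ (q k : ℝ)) :
    UpperSemicontinuous (gridSpline α β n q) :=
  upperSemicontinuous_finset_sup' _ fun k _ =>
    (isClosed_closedBox _ _).upperSemicontinuous_indicator (hq k)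

lemma exists_gridSpline_eq_indicator (q : (Fin m → Fin (n + 1)) → ℚ) (x : Fin m → ℝ) :
    ∃ k, gridSpline α β n q x =
      (closedBox (cellLower α β n k) (cellUpper α β n k)).indicator (fun _ => (q k : ℝ)) x := by
  obtain ⟨k, -, hk⟩ := Finset.exists_mem_eq_sup' Finset.univ_nonempty
    fun k => (closedBox (cellLower α β n k) (cellUpper α β n k)).indicator (fun _ => (q k : ℝ)) x
  exact ⟨k, hk⟩

lemma exists_gridSpline_eq_rat (q : (Fin m → Fin (n + 1)) → ℚ) (x : Fin m → ℝ) :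
    ∃ r : ℚ, gridSpline α β n q x = r := by
  classical
  obtain ⟨k, hk⟩ := exists_gridSpline_eq_indicator q x
  rw [hk, indicator_apply]
  split_ifs
  exacts [⟨q k, rfl⟩, ⟨0, by simp⟩]

lemma gridSpline_mem_Icc {q : (Fin m → Fin (n + 1)) → ℚ} (hq : ∀ k, (q k : ℝ) ∈ Icc (0 : ℝ) 1)
    (x : Fin m → ℝ) : gridSpline α β n q x ∈ Icc (0 : ℝ) 1 := by
  classical
  obtain ⟨k, hk⟩ := exists_gridSpline_eq_indicator q x
  rw [hk, indicator_apply]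
  split_ifs
  exacts [hq k, ⟨le_rfl, zero_le_one⟩]

lemma le_gridSpline (q : (Fin m → Fin (n + 1)) → ℚ) {k : Fin m → Fin (n + 1)} {x : Fin m → ℝ}
    (hx : x ∈ closedBox (cellLower α β n k) (cellUpper α β n k)) :
    (q k : ℝ) ≤ gridSpline α β n q x :=
  Finset.le_sup'_of_le _ (Finset.mem_univ k) (indicator_of_mem hx fun _ => (q k : ℝ)).ge

lemma gridSpline_eq_of_mem_openBox {q : (Fin m → Fin (n + 1)) → ℚ} (hq : ∀ k, 0 ≤ (q k : ℝ))
    {k : Fin m → Fin (n + 1)} {x : Fin m → ℝ}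
    (hx : x ∈ openBox (cellLower α β n k) (cellUpper α β n k)) :
    gridSpline α β n q x = q k := by
  classical
  refine le_antisymm (Finset.sup'_le _ _ fun k' _ => ?_)
    (le_gridSpline q (openBox_subset_closedBox _ _ hx))
  rw [indicator_apply]
  split_ifs with hx'
  · rw [eq_of_mem_openBox_cell_of_mem_closedBox_cell hx hx']
  · exact hq k

lemma exists_mem_closedBox_cell_gridSpline_le {q : (Fin m → Fin (n + 1)) → ℚ}
    (hq : ∀ k, 0 ≤ (q k : ℝ)) {x : Fin m → ℝ} (hx : x ∈ closedBox α β) :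
    ∃ k, x ∈ closedBox (cellLower α β n k) (cellUpper α β n k) ∧ gridSpline α β n q x ≤ q k := by
  obtain ⟨k, hk⟩ := exists_gridSpline_eq_indicator q x
  by_cases hxk : x ∈ closedBox (cellLower α β n k) (cellUpper α β n k)
  · exact ⟨k, hxk, (hk.trans (indicator_of_mem hxk _)).le⟩
  · obtain ⟨k', hk'⟩ := exists_mem_closedBox_cell (n := n) hx
    exact ⟨k', hk', (hk.trans (indicator_of_notMem hxk _)).trans_le (hq k')⟩

lemma exists_boxPartition_gridSpline_const (hαβ : ∀ i, α i ≤ β i) {q : (Fin m → Fin (n + 1)) → ℚ}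
    (hq : ∀ k, 0 ≤ (q k : ℝ)) :
    ∃ (N : ℕ) (l u : Fin N → Fin m → ℝ),
      (∀ k, closedBox (l k) (u k) ⊆ closedBox α β) ∧
      (closedBox α β ⊆ ⋃ k, closedBox (l k) (u k)) ∧
      (∀ k k', k ≠ k' → Disjoint (openBox (l k) (u k)) (openBox (l k') (u k'))) ∧
      (∀ k, ∃ r : ℚ, ∀ x ∈ openBox (l k) (u k), gridSpline α β n q x = r) := by
  let e := (finFunctionFinEquiv (m := n + 1) (n := m)).symm
  refine ⟨(n + 1) ^ m, fun j => cellLower α β n (e j), fun j => cellUpper α β n (e j),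
    fun j => closedBox_cell_subset hαβ (e j), fun x hx => ?_, fun j j' hjj' => ?_,
    fun j => ⟨q (e j), fun x hx => gridSpline_eq_of_mem_openBox hq hx⟩⟩
  · obtain ⟨k, hk⟩ := exists_mem_closedBox_cell (n := n) hx
    exact mem_iUnion.2 ⟨e.symm k, by simpa using hk⟩
  · refine disjoint_left.2 fun x hx hx' => hjj' (e.injective ?_)
    exact eq_of_mem_openBox_cell_of_mem_closedBox_cell hx (openBox_subset_closedBox _ _ hx')

lemma exists_gridSpline_dl_le (hαβ : ∀ i, α i ≤ β i) {f : (Fin m → ℝ) → ℝ}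
    (hf : ∀ x ∈ closedBox α β, f x ∈ Icc (0 : ℝ) 1) {δ : ℝ} (hδ : 0 < δ) :
    ∃ (n : ℕ) (q : (Fin m → Fin (n + 1)) → ℚ), (∀ k, (q k : ℝ) ∈ Icc (0 : ℝ) 1) ∧
      dl (closedBox α β) f (gridSpline α β n q) ≤ δ := by
  obtain ⟨n, hn⟩ := exists_gridMesh_lt α β hδ
  choose q hq hfq hqf using fun k : Fin m → Fin (n + 1) =>
    exists_rat_mem_Icc_upperBound_near ⟨_, cellLower_mem_closedBox_cell hαβ k⟩
      (fun y hy => hf y (closedBox_cell_subset hαβ k hy)) hδ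
  refine ⟨n, q, hq, dl_le_of_le_of_exists_dist_le hδ.le (fun x hx => ?_) fun x hx => ?_⟩
  · obtain ⟨k, hk⟩ := exists_mem_closedBox_cell (n := n) hx
    exact (hfq k x hk).trans (le_gridSpline q hk)
  · obtain ⟨k, hk, hgk⟩ := exists_mem_closedBox_cell_gridSpline_le (fun k => (hq k).1) hx
    obtain ⟨y, hy, hqy⟩ := hqf k
    exact ⟨y, closedBox_cell_subset hαβ k hy,
      dist_le_of_mem_closedBox_cell hδ.le (fun i => (hn i).le) hk hy, hgk.trans hqy⟩

end GridSpline

/-- The metric space (usc-fcns(S), dl) of usc functions from a rectangle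
S = [α,β] ⊆ ℝ^m into [0,1] with the hypo-distance is separable: there is a countable
dense family of rational-valued order-0 epi-splines (rational constants on the open boxes
of box partitions whose closures cover S). -/
theorem stmt16 {m : ℕ} (α β : Fin m → ℝ) (hαβ : ∀ i, α i ≤ β i) :
    ∃ D : Set ((Fin m → ℝ) → ℝ), D.Countable ∧
      (∀ g ∈ D, UpperSemicontinuousOn g (closedBox α β) ∧
        (∀ x ∈ closedBox α β, g x ∈ Set.Icc (0 : ℝ) 1) ∧
        (∀ x ∈ closedBox α β, ∃ q : ℚ, g x = (q : ℝ)) ∧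
        ∃ (N : ℕ) (l u : Fin N → Fin m → ℝ),
          (∀ k, closedBox (l k) (u k) ⊆ closedBox α β) ∧
          (closedBox α β ⊆ ⋃ k, closedBox (l k) (u k)) ∧
          (∀ k k', k ≠ k' → Disjoint (openBox (l k) (u k)) (openBox (l k') (u k'))) ∧
          (∀ k, ∃ q : ℚ, ∀ x ∈ openBox (l k) (u k), g x = (q : ℝ))) ∧
      (∀ f : (Fin m → ℝ) → ℝ, UpperSemicontinuousOn f (closedBox α β) →
        (∀ x ∈ closedBox α β, f x ∈ Set.Icc (0 : ℝ) 1) →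
        ∀ ε > (0 : ℝ), ∃ g ∈ D, dl (closedBox α β) f g < ε) := by
  refine ⟨{g | ∃ (n : ℕ) (q : (Fin m → Fin (n + 1)) → ℚ),
    (∀ k, (q k : ℝ) ∈ Icc (0 : ℝ) 1) ∧ gridSpline α β n q = g}, ?_, ?_, ?_⟩
  · refine (countable_range fun p : Σ n : ℕ, (Fin m → Fin (n + 1)) → ℚ =>
      gridSpline α β p.1 p.2).mono ?_
    rintro _ ⟨n, q, -, rfl⟩
    exact ⟨⟨n, q⟩, rfl⟩
  · rintro _ ⟨n, q, hq, rfl⟩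
    exact ⟨(upperSemicontinuous_gridSpline fun k => (hq k).1).upperSemicontinuousOn _,
      fun x _ => gridSpline_mem_Icc hq x, fun x _ => exists_gridSpline_eq_rat q x,
      exists_boxPartition_gridSpline_const hαβ fun k => (hq k).1⟩
  · intro f _ hf ε hε
    obtain ⟨n, q, hq, hdl⟩ := exists_gridSpline_dl_le hαβ hf (half_pos hε)
    exact ⟨_, ⟨n, q, hq, rfl⟩, hdl.trans_lt (half_lt_self hε)⟩
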